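/- arXiv:2212.10473 — 3 statements merged into one kernel-verified Lean document; each statement's English description precedes it below -/
import Mathlib

section
/- Let μ = λ be Lebesgue measure on [0,1] and let ν be the Borel probability measure on ℝ² equal to the half-sum of the uniform probability measures on the segments [0,1] × {−1} and [0,1] × {1}. Let h(x, y) = (x − y₁)² + 1 − y₂² for x ∈ ℝ, y = (y₁, y₂) ∈ ℝ². Then the infimum of ∫₀¹ h(x, T(x)) dx over all Borel measurable maps T : [0,1] → ℝ² with μ∘T⁻¹ ≼_c ν equals 0, and this infimum is not attained; in fact the maps T_n defined by T_n(x) = (2x − 2k/2ⁿ, 1) for x ∈ [2k/2ⁿ, (2k+1)/2ⁿ) and T_n(x) = (2x − (2k+2)/2ⁿ, −1) for x ∈ [(2k+1)/2ⁿ, (2k+2)/2ⁿ), k ∈ {0, …, 2^{n−1}−1}, satisfy μ∘T_n⁻¹ = ν and ∫₀¹ h(x, T_n(x)) dx ≤ 1/2ⁿ. -/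
open MeasureTheory ENNReal

noncomputable section

/-- Convex dominance (convex order) `ζ ≼_c η` for Borel measures on a normed space:
both measures have finite first moments and `∫ φ dζ ≤ ∫ φ dη` for every convex
function `φ` integrable with respect to `η`. -/
def ConvexDom {E : Type*} [NormedAddCommGroup E] [NormedSpace ℝ E] [MeasurableSpace E]
    (ζ η : Measure E) : Prop :=
  Integrable (fun u => ‖u‖) ζ ∧ Integrable (fun u => ‖u‖) η ∧
  ∀ φ : E → ℝ, ConvexOn ℝ Set.univ φ → Integrable φ η → ∫ u, φ u ∂ζ ≤ ∫ u, φ u ∂η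

/-- Lebesgue measure on `[0,1]`. -/
def μ01 : Measure ℝ := volume.restrict (Set.Icc 0 1)

/-- The half-sum of the uniform probability measures on the segments
`[0,1] × {−1}` and `[0,1] × {1}` in `ℝ²`. -/
def νseg : Measure (ℝ × ℝ) :=
  (2⁻¹ : ℝ≥0∞) • μ01.map (fun t => (t, -1)) + (2⁻¹ : ℝ≥0∞) • μ01.map (fun t => (t, 1))

/-- The cost function `h(x, y) = (x − y₁)² + 1 − y₂²`. -/
def hcost (x : ℝ) (y : ℝ × ℝ) : ℝ := (x - y.1) ^ 2 + 1 - y.2 ^ 2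

/-- The maps `T_n` : `T_n(x) = (2x − 2k/2ⁿ, 1)` for `x ∈ [2k/2ⁿ, (2k+1)/2ⁿ)` and
`T_n(x) = (2x − (2k+2)/2ⁿ, −1)` for `x ∈ [(2k+1)/2ⁿ, (2k+2)/2ⁿ)`. -/
def Tseq (n : ℕ) (x : ℝ) : ℝ × ℝ :=
  if Even ⌊x * 2 ^ n⌋ then (2 * x - (⌊x * 2 ^ n⌋ : ℝ) / 2 ^ n, 1)
  else (2 * x - ((⌊x * 2 ^ n⌋ : ℝ) + 1) / 2 ^ n, -1)

/-!
Admissibility is tested against the convex functions `y ↦ (ℓ y + c)⁺`, `ℓ + c` affine. Those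
vanishing on both segments confine an admissible `T` to the square `[0,1] × [-1,1]`, where
`h ≥ 0`; so zero cost forces `T x = (x, σ x)` with `σ = ±1`. For `k` large,
`(y₁ + k s y₂ - a - k)⁺` equals `(y₁ - a)⁺` on the segment at height `s` and vanishes on the
other one, so each of the sets `{σ = 1}`, `{σ = -1}` carries at most, hence exactly, half of
every `∫ (x - a)⁺ dx`. These integrals determine a finite measure on `ℝ`, so Lebesgue measure
on `{σ = 1}` would be half of Lebesgue measure on `[0,1]`, which is absurd.

`T_n` has slope `2` on each dyadic interval of length `2⁻ⁿ` and maps the two halves of a dyadic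
interval of length `2¹⁻ⁿ` onto that interval, at heights `1` and `-1`; hence `μ∘T_n⁻¹ = ν`,
while `|x - (T_n x)₁| ≤ 2⁻ⁿ` bounds the cost.
-/

open Set Filter Topology

section ConvexDom

variable {E : Type*} [NormedAddCommGroup E] [NormedSpace ℝ E]

lemma convexOn_max_affine (ℓ : E →L[ℝ] ℝ) (c : ℝ) :
    ConvexOn ℝ univ fun y => max (ℓ y + c) 0 :=
  ((ℓ : E →ₗ[ℝ] ℝ).convexOn convex_univ |>.add (convexOn_const c convex_univ)).sup
    (convexOn_const 0 convex_univ)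

variable [MeasurableSpace E] [OpensMeasurableSpace E] {ζ η : Measure E}

lemma integrable_max_affine [IsFiniteMeasure ζ] (hζ : Integrable (fun y => ‖y‖) ζ)
    (ℓ : E →L[ℝ] ℝ) (c : ℝ) : Integrable (fun y => max (ℓ y + c) 0) ζ := by
  refine ((hζ.const_mul ‖ℓ‖).add (integrable_const |c|)).mono' (by fun_prop)
    (ae_of_all _ fun y => ?_)
  rw [Real.norm_of_nonneg (le_max_right _ _), Pi.add_apply]
  refine max_le ?_ (by positivity)
  linarith [le_abs_self c, (le_abs_self (ℓ y)).trans (ℓ.le_opNorm y)]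

lemma ConvexDom.integral_max_affine_le [IsFiniteMeasure η] (h : ConvexDom ζ η)
    (ℓ : E →L[ℝ] ℝ) (c : ℝ) :
    ∫ y, max (ℓ y + c) 0 ∂ζ ≤ ∫ y, max (ℓ y + c) 0 ∂η :=
  h.2.2 _ (convexOn_max_affine ℓ c) (integrable_max_affine h.2.1 ℓ c)

lemma ConvexDom.ae_affine_nonpos [IsFiniteMeasure ζ] [IsFiniteMeasure η]
    (h : ConvexDom ζ η) {ℓ : E →L[ℝ] ℝ} {c : ℝ} (hη : ∀ᵐ y ∂η, ℓ y + c ≤ 0) :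
    ∀ᵐ y ∂ζ, ℓ y + c ≤ 0 := by
  have hη_zero : ∫ y, max (ℓ y + c) 0 ∂η = 0 :=
    integral_eq_zero_of_ae (hη.mono fun y hy => max_eq_right hy)
  have hζ_zero : ∫ y, max (ℓ y + c) 0 ∂ζ = 0 :=
    le_antisymm ((h.integral_max_affine_le ℓ c).trans_eq hη_zero)
      (integral_nonneg fun y => le_max_right _ _)
  filter_upwards [(integral_eq_zero_iff_of_nonneg (fun y => le_max_right _ _)
    (integrable_max_affine h.1 ℓ c)).1 hζ_zero] with y hy
  exact (le_max_left _ _).trans_eq hy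

end ConvexDom

def ramp (u ε x : ℝ) : ℝ := (max (x - (u - ε)) 0 - max (x - u) 0) / ε

lemma tendsto_ramp_indicator_Ici (u x : ℝ) :
    Tendsto (fun ε => ramp u ε x) (𝓝[>] 0) (𝓝 ((Ici u).indicator 1 x)) := by
  rcases le_or_gt u x with hux | hxu
  · rw [indicator_of_mem (mem_Ici.2 hux), Pi.one_apply]
    refine tendsto_const_nhds.congr' (eventually_nhdsWithin_of_forall fun ε (hε : 0 < ε) => ?_)
    dsimp only [ramp]
    rw [max_eq_left (by linarith), max_eq_left (by linarith)]
    field_simp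
    ring
  · rw [indicator_of_notMem (notMem_Ici.2 hxu)]
    refine tendsto_const_nhds.congr' ?_
    filter_upwards [Ioo_mem_nhdsGT (sub_pos.2 hxu)] with ε hε
    rw [ramp, max_eq_right (by linarith [hε.2]), max_eq_right (by linarith), sub_self, zero_div]

lemma abs_ramp_le_one (u x : ℝ) {ε : ℝ} (hε : 0 < ε) : |ramp u ε x| ≤ 1 := by
  rw [ramp, abs_div, abs_of_pos hε, div_le_one hε, abs_le]
  constructor
  · linarith [max_le_max_right 0 (by linarith : x - u ≤ x - (u - ε))]
  · rw [sub_le_iff_le_add, max_le_iff]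
    exact ⟨by linarith [le_max_left (x - u) 0], by positivity⟩

lemma tendsto_integral_ramp (ρ : Measure ℝ) [IsFiniteMeasure ρ] (u : ℝ) :
    Tendsto (fun ε => ∫ x, ramp u ε x ∂ρ) (𝓝[>] 0) (𝓝 (ρ.real (Ici u))) := by
  rw [← integral_indicator_one measurableSet_Ici]
  refine tendsto_integral_filter_of_dominated_convergence (fun _ => 1)
    (Eventually.of_forall fun ε => by unfold ramp; fun_prop) ?_ (integrable_const 1)
    (ae_of_all _ fun x => tendsto_ramp_indicator_Ici u x)
  exact eventually_nhdsWithin_of_forall fun ε hε => ae_of_all _ fun x => abs_ramp_le_one u x hε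

lemma integrable_max_sub {ρ : Measure ℝ} [IsFiniteMeasure ρ] (hρ : Integrable id ρ) (a : ℝ) :
    Integrable (fun x => max (x - a) 0) ρ := by
  simpa [sub_eq_add_neg] using
    integrable_max_affine hρ.norm (ContinuousLinearMap.id ℝ ℝ) (-a)

lemma integral_ramp {ρ : Measure ℝ} [IsFiniteMeasure ρ] (hρ : Integrable id ρ) (u ε : ℝ) :
    ∫ x, ramp u ε x ∂ρ = (∫ x, max (x - (u - ε)) 0 ∂ρ - ∫ x, max (x - u) 0 ∂ρ) / ε := by
  rw [← integral_sub (integrable_max_sub hρ _) (integrable_max_sub hρ _), ← integral_div]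
  rfl

theorem MeasureTheory.Measure.ext_of_integral_max_sub_eq {μ ν : Measure ℝ}
    [IsFiniteMeasure μ] [IsFiniteMeasure ν] (hμ : Integrable id μ) (hν : Integrable id ν)
    (h : ∀ a, ∫ x, max (x - a) 0 ∂μ = ∫ x, max (x - a) 0 ∂ν) : μ = ν := by
  refine Measure.ext_of_Ici μ ν fun u => ?_
  have hreal : μ.real (Ici u) = ν.real (Ici u) := by
    refine tendsto_nhds_unique (tendsto_integral_ramp μ u) ?_
    simpa only [integral_ramp hμ, integral_ramp hν, h] using tendsto_integral_ramp ν u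
  simpa [measureReal_def, ENNReal.toReal_eq_toReal_iff'] using hreal

instance : IsProbabilityMeasure μ01 :=
  ⟨by simp [μ01]⟩

instance : IsProbabilityMeasure νseg :=
  ⟨by
    have : ∀ s : ℝ, (μ01.map fun t => (t, s)) univ = 1 := fun s => by
      rw [Measure.map_apply (by fun_prop) MeasurableSet.univ, preimage_univ, measure_univ]
    simp [νseg, this, ENNReal.inv_two_add_inv_two]⟩

lemma ae_mem_segments_νseg : ∀ᵐ y ∂νseg, y.1 ∈ Icc 0 1 ∧ (y.2 = -1 ∨ y.2 = 1) := by
  have hmeas : MeasurableSet {y : ℝ × ℝ | y.1 ∈ Icc 0 1 ∧ (y.2 = -1 ∨ y.2 = 1)} :=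
    (measurableSet_Icc.preimage measurable_fst).inter
      ((measurableSet_singleton _).union (measurableSet_singleton _) |>.preimage measurable_snd)
  have hμ01 : ∀ᵐ t ∂μ01, t ∈ Icc (0 : ℝ) 1 := ae_restrict_mem measurableSet_Icc
  simp only [νseg, ae_add_measure_iff]
  refine ⟨Measure.ae_smul_measure ?_ _, Measure.ae_smul_measure ?_ _⟩ <;>
  · rw [ae_map_iff (by fun_prop) hmeas]
    filter_upwards [hμ01] with t ht using by simp [ht]

lemma integral_νseg {φ : ℝ × ℝ → ℝ} (hφ : Continuous φ) :
    ∫ y, φ y ∂νseg = 2⁻¹ * ∫ t, φ (t, -1) ∂μ01 + 2⁻¹ * ∫ t, φ (t, 1) ∂μ01 := by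
  have hint : ∀ s : ℝ, Integrable φ (μ01.map fun t => (t, s)) := fun s =>
    (integrable_map_measure hφ.aestronglyMeasurable (by fun_prop)).2
      (hφ.comp (by fun_prop)).integrableOn_Icc
  rw [νseg, integral_add_measure ((hint _).smul_measure (by simp))
      ((hint _).smul_measure (by simp)), integral_smul_measure, integral_smul_measure,
    integral_map (by fun_prop) hφ.aestronglyMeasurable,
    integral_map (by fun_prop) hφ.aestronglyMeasurable]
  simp

lemma ConvexDom.ae_affine_nonpos_of_segments {ζ : Measure (ℝ × ℝ)} [IsFiniteMeasure ζ]
    (h : ConvexDom ζ νseg) {ℓ : ℝ × ℝ →L[ℝ] ℝ} {c : ℝ}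
    (hseg : ∀ t ∈ Icc (0 : ℝ) 1, ∀ s : ℝ, s = -1 ∨ s = 1 → ℓ (t, s) + c ≤ 0) :
    ∀ᵐ y ∂ζ, ℓ y + c ≤ 0 :=
  h.ae_affine_nonpos (ae_mem_segments_νseg.mono fun y hy => hseg y.1 hy.1 y.2 hy.2)

lemma ConvexDom.ae_mem_square {ζ : Measure (ℝ × ℝ)} [IsFiniteMeasure ζ]
    (h : ConvexDom ζ νseg) : ∀ᵐ y ∂ζ, y.1 ∈ Icc 0 1 ∧ y.2 ∈ Icc (-1) 1 := by
  have h₁ := h.ae_affine_nonpos_of_segments (ℓ := .fst ℝ ℝ ℝ) (c := -1)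
    (by intro t ht s _; simp; linarith [ht.2])
  have h₂ := h.ae_affine_nonpos_of_segments (ℓ := -.fst ℝ ℝ ℝ) (c := 0)
    (by intro t ht s _; simp; linarith [ht.1])
  have h₃ := h.ae_affine_nonpos_of_segments (ℓ := .snd ℝ ℝ ℝ) (c := -1)
    (by intro t _ s hs; rcases hs with rfl | rfl <;> norm_num)
  have h₄ := h.ae_affine_nonpos_of_segments (ℓ := -.snd ℝ ℝ ℝ) (c := -1)
    (by intro t _ s hs; rcases hs with rfl | rfl <;> norm_num)
  filter_upwards [h₁, h₂, h₃, h₄] with y h₁ h₂ h₃ h₄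
  simp only [ContinuousLinearMap.coe_fst', ContinuousLinearMap.coe_snd',
    neg_apply] at h₁ h₂ h₃ h₄
  exact ⟨⟨by linarith, by linarith⟩, ⟨by linarith, by linarith⟩⟩

lemma integral_max_sub_restrict_le {σ : ℝ → ℝ} (hσm : Measurable σ)
    (hσ : ∀ᵐ x ∂μ01, σ x = -1 ∨ σ x = 1) (h : ConvexDom (μ01.map fun x => (x, σ x)) νseg)
    {s : ℝ} (hs : s = -1 ∨ s = 1) (a : ℝ) :
    ∫ x in {x | σ x = s}, max (x - a) 0 ∂μ01 ≤ 2⁻¹ * ∫ x, max (x - a) 0 ∂μ01 := by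
  obtain ⟨k, hk⟩ : ∃ k : ℝ, 1 - a - 2 * k < 0 :=
    ⟨|a| + 1, by linarith [neg_le_abs a, le_abs_self a]⟩
  let ℓ : ℝ × ℝ →L[ℝ] ℝ := .fst ℝ ℝ ℝ + (k * s) • .snd ℝ ℝ ℝ
  -- `k` is large enough that the test function vanishes on the segment at height `-s`
  have hφ : ∀ t ∈ Icc (0 : ℝ) 1, ∀ s' : ℝ, s' = -1 ∨ s' = 1 →
      max (ℓ (t, s') + -(a + k)) 0 = if s' = s then max (t - a) 0 else 0 := by
    intro t ht s' hs'
    simp only [ℓ, add_apply, smul_apply, ContinuousLinearMap.coe_fst',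
      ContinuousLinearMap.coe_snd', smul_eq_mul]
    rcases hs with rfl | rfl <;> rcases hs' with rfl | rfl <;> norm_num <;>
      first | rw [sub_eq_add_neg] | linarith [ht.2]
  have hμ01 : ∀ᵐ t ∂μ01, t ∈ Icc (0 : ℝ) 1 := ae_restrict_mem measurableSet_Icc
  have hseg : ∀ s' : ℝ, s' = -1 ∨ s' = 1 → ∫ t, max (ℓ (t, s') + -(a + k)) 0 ∂μ01 =
      if s' = s then ∫ t, max (t - a) 0 ∂μ01 else 0 := fun s' hs' => by
    rw [integral_congr_ae (hμ01.mono fun t ht => hφ t ht s' hs')]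
    split_ifs <;> simp
  have key := h.integral_max_affine_le ℓ (-(a + k))
  rw [integral_map (by fun_prop) (by fun_prop), integral_νseg (by fun_prop),
    hseg _ (Or.inl rfl), hseg _ (Or.inr rfl)] at key
  calc ∫ x in {x | σ x = s}, max (x - a) 0 ∂μ01
      = ∫ x, max (ℓ (x, σ x) + -(a + k)) 0 ∂μ01 := by
        rw [← integral_indicator (measurableSet_eq_fun hσm measurable_const)]
        refine integral_congr_ae ?_
        filter_upwards [hμ01, hσ] with x hx hσx
        rw [hφ x hx _ hσx]
        simp [indicator_apply]
    _ ≤ 2⁻¹ * ∫ x, max (x - a) 0 ∂μ01 := by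
        rcases hs with rfl | rfl <;> norm_num at key ⊢ <;> exact key

lemma integrable_id_μ01 : Integrable id μ01 :=
  continuous_id.integrableOn_Icc

lemma not_convexDom_map_graph {σ : ℝ → ℝ} (hσm : Measurable σ)
    (hσ : ∀ᵐ x ∂μ01, σ x = -1 ∨ σ x = 1) :
    ¬ ConvexDom (μ01.map fun x => (x, σ x)) νseg := by
  intro h
  have hA : MeasurableSet {x | σ x = 1} := measurableSet_eq_fun hσm measurable_const
  have hAc : ({x | σ x = 1}ᶜ : Set ℝ) =ᵐ[μ01] {x | σ x = -1} := by
    refine eventuallyEq_set.2 (hσ.mono fun x hx => ?_)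
    rcases hx with hx | hx <;> norm_num [hx]
  have := μ01.smul_finite (c := 2⁻¹) (by simp)
  have hhalf : μ01.restrict {x | σ x = 1} = (2⁻¹ : ℝ≥0∞) • μ01 := by
    refine Measure.ext_of_integral_max_sub_eq integrable_id_μ01.restrict
      (integrable_id_μ01.smul_measure (by simp)) fun a => ?_
    have h₁ := integral_max_sub_restrict_le hσm hσ h (Or.inr rfl) a
    have h₂ := integral_max_sub_restrict_le hσm hσ h (Or.inl rfl) a
    rw [← Measure.restrict_congr_set hAc] at h₂
    have hsum := integral_add_compl hA (integrable_max_sub integrable_id_μ01 a)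
    rw [integral_smul_measure, ENNReal.toReal_inv, ENNReal.toReal_ofNat, smul_eq_mul]
    linarith
  have hA_half : μ01 {x | σ x = 1} = 2⁻¹ := by
    simpa using congr($hhalf univ)
  have := congr(ENNReal.toReal ($hhalf {x | σ x = 1}))
  rw [Measure.restrict_apply_self, Measure.smul_apply, hA_half, smul_eq_mul] at this
  norm_num at this

lemma hcost_mem_Icc {x : ℝ} {y : ℝ × ℝ} (hx : x ∈ Icc (0 : ℝ) 1) (hy₁ : y.1 ∈ Icc (0 : ℝ) 1)
    (hy₂ : y.2 ∈ Icc (-1 : ℝ) 1) : hcost x y ∈ Icc 0 2 := by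
  obtain ⟨hx₀, hx₁⟩ := hx; obtain ⟨h₁₀, h₁₁⟩ := hy₁; obtain ⟨h₂₀, h₂₁⟩ := hy₂
  constructor <;> simp only [hcost] <;> nlinarith

lemma hcost_eq_zero_iff {x : ℝ} {y : ℝ × ℝ} (hy₂ : y.2 ∈ Icc (-1 : ℝ) 1) :
    hcost x y = 0 ↔ y.1 = x ∧ (y.2 = -1 ∨ y.2 = 1) := by
  obtain ⟨h₂₀, h₂₁⟩ := hy₂
  rw [show hcost x y = (x - y.1) ^ 2 + (1 - y.2 ^ 2) by simp only [hcost]; ring,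
    add_eq_zero_iff_of_nonneg (sq_nonneg _) (by nlinarith), sq_eq_zero_iff, sub_eq_zero,
    sub_eq_zero, eq_comm (a := (1 : ℝ)), sq_eq_one_iff, or_comm, eq_comm (a := x)]

theorem integral_hcost_pos {T : ℝ → ℝ × ℝ} (hT : Measurable T)
    (h : ConvexDom (μ01.map T) νseg) : 0 < ∫ x, hcost x (T x) ∂μ01 := by
  have hbox : ∀ᵐ x ∂μ01,
      x ∈ Icc (0 : ℝ) 1 ∧ (T x).1 ∈ Icc (0 : ℝ) 1 ∧ (T x).2 ∈ Icc (-1 : ℝ) 1 := by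
    filter_upwards [ae_restrict_mem measurableSet_Icc,
      ae_of_ae_map hT.aemeasurable h.ae_mem_square] with x hx hTx using ⟨hx, hTx⟩
  have hcost_ae : ∀ᵐ x ∂μ01, hcost x (T x) ∈ Icc 0 2 :=
    hbox.mono fun x hx => hcost_mem_Icc hx.1 hx.2.1 hx.2.2
  have hnonneg : 0 ≤ᵐ[μ01] fun x => hcost x (T x) := hcost_ae.mono fun x hx => hx.1
  have hint : Integrable (fun x => hcost x (T x)) μ01 := by
    refine (integrable_const 2).mono' (by simp only [hcost]; fun_prop) ?_
    filter_upwards [hcost_ae] with x hx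
    rw [Real.norm_of_nonneg hx.1]
    exact hx.2
  refine (integral_nonneg_of_ae hnonneg).lt_of_ne fun hzero => ?_
  have hgraph : ∀ᵐ x ∂μ01, (T x).1 = x ∧ ((T x).2 = -1 ∨ (T x).2 = 1) := by
    filter_upwards [(integral_eq_zero_iff_of_nonneg_ae hnonneg hint).1 hzero.symm, hbox]
      with x hx hbx
    exact (hcost_eq_zero_iff hbx.2.2).1 hx
  refine not_convexDom_map_graph hT.snd (hgraph.mono fun x hx => hx.2) ?_
  rwa [← Measure.map_congr (hgraph.mono fun x hx => show T x = (x, (T x).2) from Prod.ext hx.1 rfl)]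

lemma MeasureTheory.Measure.sum_restrict_Ico_of_monotone (μ : Measure ℝ) {f : ℕ → ℝ}
    (hf : Monotone f) (N : ℕ) : ∑ k ∈ Finset.range N, μ.restrict (Ico (f k) (f (k + 1))) =
      μ.restrict (Ico (f 0) (f N)) := by
  induction N with
  | zero => simp
  | succ N ih =>
    rw [Finset.sum_range_succ, ih, ← Measure.restrict_union Ico_disjoint_Ico_same measurableSet_Ico,
      Ico_union_Ico_eq_Ico (hf (Nat.zero_le N)) (hf N.le_succ)]

lemma map_volume_two_mul_sub (c : ℝ) :
    volume.map (fun x : ℝ => 2 * x - c) = (2⁻¹ : ℝ≥0∞) • volume := by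
  have hcomp : (fun x : ℝ => 2 * x - c) = (· + -c) ∘ (2 * ·) := by
    ext x; simp [sub_eq_add_neg]
  rw [hcomp, ← Measure.map_map (by fun_prop) (by fun_prop),
    Real.map_volume_mul_left two_ne_zero, Measure.map_smul, map_add_right_eq_self,
    abs_of_pos (by norm_num), ENNReal.ofReal_inv_of_pos two_pos, ENNReal.ofReal_ofNat]

lemma map_restrict_Ico_two_mul_sub (a b c : ℝ) :
    (volume.restrict (Ico a b)).map (fun x => 2 * x - c) =
      (2⁻¹ : ℝ≥0∞) • volume.restrict (Ico (2 * a - c) (2 * b - c)) := by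
  have hpre : (fun x : ℝ => 2 * x - c) ⁻¹' Ico (2 * a - c) (2 * b - c) = Ico a b := by
    ext x; simp
  rw [← hpre, ← Measure.restrict_map (by fun_prop) measurableSet_Ico, map_volume_two_mul_sub,
    Measure.restrict_smul]

lemma map_restrict_Ico_of_eqOn {β : Type*} [MeasurableSpace β] {g : ℝ → β} {e : ℝ → β}
    (he : Measurable e) {a b c : ℝ} (hg : EqOn g (fun x => e (2 * x - c)) (Ico a b)) :
    (volume.restrict (Ico a b)).map g =
      ((2⁻¹ : ℝ≥0∞) • volume.restrict (Ico (2 * a - c) (2 * b - c))).map e := by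
  rw [Measure.map_congr ((ae_restrict_iff' measurableSet_Ico).2 (ae_of_all _ hg)),
    ← map_restrict_Ico_two_mul_sub, Measure.map_map he (by fun_prop)]
  rfl

def dyadicIco (n j : ℕ) : Set ℝ := Ico (j / 2 ^ n) ((j + 1) / 2 ^ n)

lemma sum_restrict_dyadicIco (n : ℕ) :
    ∑ j ∈ Finset.range (2 ^ n), volume.restrict (dyadicIco n j) = μ01 := by
  have hmono : Monotone fun j : ℕ => (j : ℝ) / 2 ^ n := fun i j hij =>
    div_le_div_of_nonneg_right (by exact_mod_cast hij) (by positivity)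
  have := Measure.sum_restrict_Ico_of_monotone volume hmono (2 ^ n)
  simp only [Nat.cast_add, Nat.cast_one, Nat.cast_zero, zero_div, Nat.cast_pow,
    Nat.cast_ofNat, div_self (by positivity : (2 : ℝ) ^ n ≠ 0)] at this
  rw [μ01, ← Measure.restrict_congr_set Ico_ae_eq_Icc, ← this]
  rfl

lemma dyadicIco_union (m k : ℕ) :
    dyadicIco (m + 1) (2 * k) ∪ dyadicIco (m + 1) (2 * k + 1) = dyadicIco m k := by
  have h2m : (0 : ℝ) < 2 ^ m := by positivity
  simp only [dyadicIco, Nat.cast_mul, Nat.cast_add, Nat.cast_one, Nat.cast_ofNat, pow_succ]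
  rw [show 2 * (k : ℝ) / (2 ^ m * 2) = k / 2 ^ m by field_simp,
    show (2 * (k : ℝ) + 1 + 1) / (2 ^ m * 2) = (k + 1) / 2 ^ m by field_simp; ring]
  exact Ico_union_Ico_eq_Ico (by rw [div_le_div_iff₀ h2m (by positivity)]; nlinarith)
    (by rw [div_le_div_iff₀ (by positivity) h2m]; nlinarith)

lemma floor_mul_two_pow_of_mem_dyadicIco {n j : ℕ} {x : ℝ} (hx : x ∈ dyadicIco n j) :
    ⌊x * 2 ^ n⌋ = j := by
  have h2n : (0 : ℝ) < 2 ^ n := by positivity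
  obtain ⟨h₁, h₂⟩ := hx
  rw [div_le_iff₀ h2n] at h₁
  rw [lt_div_iff₀ h2n] at h₂
  rw [Int.floor_eq_iff]
  push_cast
  exact ⟨h₁, h₂⟩

lemma measurable_Tseq (n : ℕ) : Measurable (Tseq n) :=
  Measurable.ite ((Int.measurable_floor.comp (by fun_prop : Measurable fun x : ℝ => x * 2 ^ n))
      (MeasurableSet.of_discrete (s := {k : ℤ | Even k}))) (by fun_prop) (by fun_prop)

lemma eqOn_Tseq_even (m k : ℕ) :
    EqOn (Tseq (m + 1)) (fun x => (2 * x - k / 2 ^ m, 1)) (dyadicIco (m + 1) (2 * k)) := by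
  intro x hx
  rw [Tseq, floor_mul_two_pow_of_mem_dyadicIco hx, if_pos (by simp)]
  refine Prod.ext ?_ rfl
  push_cast
  rw [pow_succ]
  field_simp

lemma eqOn_Tseq_odd (m k : ℕ) :
    EqOn (Tseq (m + 1)) (fun x => (2 * x - (k + 1) / 2 ^ m, -1))
      (dyadicIco (m + 1) (2 * k + 1)) := by
  intro x hx
  rw [Tseq, floor_mul_two_pow_of_mem_dyadicIco hx, if_neg (by simp)]
  refine Prod.ext ?_ rfl
  push_cast
  rw [pow_succ]
  field_simp
  ring

lemma map_restrict_dyadicIco_even (m k : ℕ) :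
    (volume.restrict (dyadicIco (m + 1) (2 * k))).map (Tseq (m + 1)) =
      ((2⁻¹ : ℝ≥0∞) • volume.restrict (dyadicIco m k)).map fun y => (y, 1) := by
  rw [dyadicIco, map_restrict_Ico_of_eqOn (e := fun y => (y, 1)) (by fun_prop) (eqOn_Tseq_even m k),
    dyadicIco]
  push_cast
  rw [pow_succ]
  congr 4 <;> field_simp <;> ring

lemma map_restrict_dyadicIco_odd (m k : ℕ) :
    (volume.restrict (dyadicIco (m + 1) (2 * k + 1))).map (Tseq (m + 1)) =
      ((2⁻¹ : ℝ≥0∞) • volume.restrict (dyadicIco m k)).map fun y => (y, -1) := by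
  rw [dyadicIco, map_restrict_Ico_of_eqOn (e := fun y => (y, -1)) (by fun_prop) (eqOn_Tseq_odd m k),
    dyadicIco]
  push_cast
  rw [pow_succ]
  congr 4 <;> field_simp <;> ring

theorem map_Tseq (m : ℕ) : μ01.map (Tseq (m + 1)) = νseg := by
  have hT := measurable_Tseq (m + 1)
  calc μ01.map (Tseq (m + 1))
      = ∑ k ∈ Finset.range (2 ^ m),
          ((volume.restrict (dyadicIco (m + 1) (2 * k))).map (Tseq (m + 1)) +
            (volume.restrict (dyadicIco (m + 1) (2 * k + 1))).map (Tseq (m + 1))) := by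
        rw [← sum_restrict_dyadicIco m, Measure.map_finset_sum hT.aemeasurable]
        refine Finset.sum_congr rfl fun k _ => ?_
        have hdisj : Disjoint (dyadicIco (m + 1) (2 * k)) (dyadicIco (m + 1) (2 * k + 1)) := by
          simp only [dyadicIco]
          push_cast
          exact Ico_disjoint_Ico_same
        rw [← dyadicIco_union, Measure.restrict_union hdisj measurableSet_Ico,
          Measure.map_add _ _ hT]
    _ = ∑ k ∈ Finset.range (2 ^ m),
          (((2⁻¹ : ℝ≥0∞) • volume.restrict (dyadicIco m k)).map (fun y => (y, 1)) +
            ((2⁻¹ : ℝ≥0∞) • volume.restrict (dyadicIco m k)).map fun y => (y, -1)) := by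
        simp only [map_restrict_dyadicIco_even, map_restrict_dyadicIco_odd]
    _ = νseg := by
        rw [Finset.sum_add_distrib, ← Measure.map_finset_sum (by fun_prop),
          ← Measure.map_finset_sum (by fun_prop), ← Finset.smul_sum, sum_restrict_dyadicIco,
          Measure.map_smul, Measure.map_smul, νseg, add_comm]

lemma sq_snd_Tseq (n : ℕ) (x : ℝ) : (Tseq n x).2 ^ 2 = 1 := by
  unfold Tseq; split_ifs <;> norm_num

lemma abs_sub_fst_Tseq_le (n : ℕ) (x : ℝ) : |x - (Tseq n x).1| ≤ 1 / 2 ^ n := by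
  have h2n : (0 : ℝ) < 2 ^ n := by positivity
  have hle : (⌊x * 2 ^ n⌋ : ℝ) / 2 ^ n ≤ x := (div_le_iff₀ h2n).2 (Int.floor_le _)
  have hlt : x < ((⌊x * 2 ^ n⌋ : ℝ) + 1) / 2 ^ n := (lt_div_iff₀ h2n).2 (Int.lt_floor_add_one _)
  rw [add_div] at hlt
  unfold Tseq
  split_ifs <;> rw [abs_le] <;> constructor <;> simp only [add_div] at * <;> linarith

lemma hcost_Tseq_le (n : ℕ) (x : ℝ) : hcost x (Tseq n x) ≤ 1 / 2 ^ n := by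
  have hδ : (1 : ℝ) / 2 ^ n ≤ 1 := div_le_one_of_le₀ (one_le_pow₀ one_le_two) (by positivity)
  calc hcost x (Tseq n x) = |x - (Tseq n x).1| ^ 2 := by rw [hcost, sq_snd_Tseq, sq_abs]; ring
    _ ≤ (1 / 2 ^ n) ^ 2 := by gcongr; exact abs_sub_fst_Tseq_le n x
    _ ≤ 1 / 2 ^ n := by nlinarith [show (0 : ℝ) ≤ 1 / 2 ^ n by positivity]

lemma integral_hcost_Tseq_le (n : ℕ) : ∫ x, hcost x (Tseq n x) ∂μ01 ≤ 1 / 2 ^ n := by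
  have hnonneg : ∀ x, 0 ≤ hcost x (Tseq n x) := fun x => by
    rw [hcost, sq_snd_Tseq]; nlinarith [sq_nonneg (x - (Tseq n x).1)]
  calc ∫ x, hcost x (Tseq n x) ∂μ01 ≤ ∫ _, 1 / 2 ^ n ∂μ01 :=
        integral_mono_of_nonneg (ae_of_all _ hnonneg) (integrable_const _)
          (ae_of_all _ (hcost_Tseq_le n))
    _ = 1 / 2 ^ n := by simp

/-- **Non-existence of a minimizer in a Monge problem with convex dominance.**
Let `μ` be Lebesgue measure on `[0,1]`, `ν` the half-sum of the uniform probability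
measures on `[0,1] × {−1}` and `[0,1] × {1}`, and `h(x,y) = (x − y₁)² + 1 − y₂²`.
Then the infimum of `∫₀¹ h(x, T(x)) dx` over Borel maps `T : [0,1] → ℝ²` with
`μ∘T⁻¹ ≼_c ν` equals `0` but is not attained: every admissible `T` has strictly positive
cost, while the maps `T_n` satisfy `μ∘T_n⁻¹ = ν` and `∫₀¹ h(x, T_n(x)) dx ≤ 1/2ⁿ`. -/
theorem monge_convexDom_infimum_not_attained :
    (∀ T : ℝ → ℝ × ℝ, Measurable T → ConvexDom (μ01.map T) νseg →
      0 < ∫ x, hcost x (T x) ∂μ01) ∧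
    (∀ n : ℕ, 1 ≤ n →
      Measurable (Tseq n) ∧
      μ01.map (Tseq n) = νseg ∧
      ∫ x, hcost x (Tseq n x) ∂μ01 ≤ 1 / 2 ^ n) := by
  refine ⟨fun T hT h => integral_hcost_pos hT h, fun n hn => ?_⟩
  obtain ⟨m, rfl⟩ := Nat.exists_eq_add_of_le' hn
  exact ⟨measurable_Tseq _, map_Tseq m, integral_hcost_Tseq_le _⟩
end
end

section
/- There is no Lebesgue measurable set A ⊂ [0,1] such that ∫_A φ(y) dy = (1/2) ∫₀¹ φ(y) dy for every convex function φ : [0,1] → ℝ. (Indeed, such equalities would force the indicator of A to equal 1/2 almost everywhere, which is impossible.) -/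
/-!
The hinge functions `y ↦ max (y - c) 0` are convex, and for `c < c'` the difference
`max (y - c) 0 - max (y - c') 0` lies between `(c' - c) • 1_{[c', ∞)}` and `(c' - c) • 1_{[c, ∞)}`.
Hence the integrals of the hinge functions against a finite measure on `ℝ` pin down the measure of
every ray `[c, ∞)` (by continuity from above), and so the measure itself. A set `A` as in the
statement would therefore satisfy `volume.restrict A = 2⁻¹ • volume.restrict [0, 1]`; evaluating at
`[0, 1]` gives `volume A = 1/2`, evaluating at `A` gives `volume A = volume A / 2`.
-/

open MeasureTheory Set Filter Topology
open scoped ENNReal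

namespace MeasureTheory

lemma indicator_Ici_le_max_sub_sub_max_sub {c c' : ℝ} (hcc' : c ≤ c') (y : ℝ) :
    (Ici c').indicator (fun _ => c' - c) y ≤ max (y - c) 0 - max (y - c') 0 := by
  by_cases hy : y ∈ Ici c'
  · rw [indicator_of_mem hy, max_eq_left (by linarith [mem_Ici.1 hy]),
      max_eq_left (by linarith [mem_Ici.1 hy])]
    linarith
  · rw [indicator_of_notMem hy]
    exact sub_nonneg.2 (max_le_max (by linarith) le_rfl)

lemma max_sub_sub_max_sub_le_indicator_Ici {c c' : ℝ} (hcc' : c ≤ c') (y : ℝ) :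
    max (y - c) 0 - max (y - c') 0 ≤ (Ici c).indicator (fun _ => c' - c) y := by
  by_cases hy : y ∈ Ici c
  · rw [indicator_of_mem hy, max_eq_left (by linarith [mem_Ici.1 hy])]
    linarith [le_max_left (y - c') 0]
  · have hyc : y < c := not_le.1 hy
    rw [indicator_of_notMem hy, max_eq_right (by linarith), max_eq_right (by linarith), sub_zero]

variable {μ ν : Measure ℝ}

lemma mul_measureReal_Ici_le_integral_max_sub [IsFiniteMeasure μ]
    (hμ : ∀ c, Integrable (fun y => max (y - c) 0) μ) {c c' : ℝ} (hcc' : c ≤ c') :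
    (c' - c) * μ.real (Ici c') ≤ ∫ y, max (y - c) 0 ∂μ - ∫ y, max (y - c') 0 ∂μ := by
  rw [← integral_sub (hμ c) (hμ c'), mul_comm, ← smul_eq_mul,
    ← integral_indicator_const _ measurableSet_Ici]
  exact integral_mono ((integrable_const _).indicator measurableSet_Ici)
    ((hμ c).sub (hμ c')) (indicator_Ici_le_max_sub_sub_max_sub hcc')

lemma integral_max_sub_le_mul_measureReal_Ici [IsFiniteMeasure μ]
    (hμ : ∀ c, Integrable (fun y => max (y - c) 0) μ) {c c' : ℝ} (hcc' : c ≤ c') :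
    ∫ y, max (y - c) 0 ∂μ - ∫ y, max (y - c') 0 ∂μ ≤ (c' - c) * μ.real (Ici c) := by
  rw [← integral_sub (hμ c) (hμ c'), mul_comm, ← smul_eq_mul,
    ← integral_indicator_const _ measurableSet_Ici]
  exact integral_mono ((hμ c).sub (hμ c')) ((integrable_const _).indicator measurableSet_Ici)
    (max_sub_sub_max_sub_le_indicator_Ici hcc')

lemma measure_Ici_le_of_integral_max_sub_eq [IsFiniteMeasure μ] [IsFiniteMeasure ν]
    (hμ : ∀ c, Integrable (fun y => max (y - c) 0) μ)
    (hν : ∀ c, Integrable (fun y => max (y - c) 0) ν)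
    (h : ∀ c, ∫ y, max (y - c) 0 ∂μ = ∫ y, max (y - c) 0 ∂ν) {c c' : ℝ} (hcc' : c < c') :
    μ (Ici c') ≤ ν (Ici c) := by
  have hreal : (c' - c) * μ.real (Ici c') ≤ (c' - c) * ν.real (Ici c) :=
    calc (c' - c) * μ.real (Ici c')
        ≤ ∫ y, max (y - c) 0 ∂μ - ∫ y, max (y - c') 0 ∂μ :=
          mul_measureReal_Ici_le_integral_max_sub hμ hcc'.le
      _ = ∫ y, max (y - c) 0 ∂ν - ∫ y, max (y - c') 0 ∂ν := by rw [h, h]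
      _ ≤ (c' - c) * ν.real (Ici c) := integral_max_sub_le_mul_measureReal_Ici hν hcc'.le
  rw [← ENNReal.toReal_le_toReal (measure_ne_top _ _) (measure_ne_top _ _)]
  exact le_of_mul_le_mul_left hreal (sub_pos.2 hcc')

lemma le_measure_Ici_of_forall_lt [IsFiniteMeasure ν] {a : ℝ≥0∞} {x : ℝ}
    (h : ∀ c < x, a ≤ ν (Ici c)) : a ≤ ν (Ici x) := by
  have hinter : ⋂ r > (0 : ℝ), Ici (x - r) = Ici x := by
    ext y
    simp only [mem_iInter, mem_Ici, sub_le_iff_le_add]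
    exact ⟨fun hy => le_of_forall_pos_le_add fun r hr => hy r hr,
      fun hy r hr => by linarith⟩
  have hlim : Tendsto (fun r => ν (Ici (x - r))) (𝓝[>] 0) (𝓝 (ν (Ici x))) := by
    rw [← hinter]
    exact tendsto_measure_biInter_gt (fun _ _ => nullMeasurableSet_Ici)
      (fun _ _ _ hrs => Ici_subset_Ici.2 (by linarith)) ⟨1, one_pos, measure_ne_top _ _⟩
  exact ge_of_tendsto hlim (eventually_mem_nhdsWithin.mono fun r hr => h _ (sub_lt_self x hr))

theorem Measure.ext_of_forall_integral_max_sub_eq [IsFiniteMeasure μ] [IsFiniteMeasure ν]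
    (hμ : ∀ c, Integrable (fun y => max (y - c) 0) μ)
    (hν : ∀ c, Integrable (fun y => max (y - c) 0) ν)
    (h : ∀ c, ∫ y, max (y - c) 0 ∂μ = ∫ y, max (y - c) 0 ∂ν) : μ = ν :=
  Measure.ext_of_Ici μ ν fun _ => le_antisymm
    (le_measure_Ici_of_forall_lt fun _ hc => measure_Ici_le_of_integral_max_sub_eq hμ hν h hc)
    (le_measure_Ici_of_forall_lt fun _ hc =>
      measure_Ici_le_of_integral_max_sub_eq hν hμ (fun c => (h c).symm) hc)

end MeasureTheory

/-- **No measurable subset of `[0,1]` halves the integral of every convex function.**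
There is no Lebesgue measurable set `A ⊆ [0,1]` such that
`∫_A φ(y) dy = (1/2) ∫₀¹ φ(y) dy` for every convex function `φ : [0,1] → ℝ`. -/
theorem no_measurable_set_halving_convex_integrals :
    ¬ ∃ A : Set ℝ, MeasurableSet A ∧ A ⊆ Set.Icc 0 1 ∧
      ∀ φ : ℝ → ℝ, ConvexOn ℝ (Set.Icc 0 1) φ →
        ∫ y in A, φ y = (1 / 2) * ∫ y in Set.Icc (0:ℝ) 1, φ y := by
  rintro ⟨A, hA, hA01, hφ⟩
  have hAfin : volume A ≠ ∞ := ((measure_mono hA01).trans_lt measure_Icc_lt_top).ne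
  have : IsFiniteMeasure (volume.restrict A) := isFiniteMeasure_restrict.2 hAfin
  have hcont (c : ℝ) : Continuous fun y : ℝ => max (y - c) 0 := by fun_prop
  have hconv (c : ℝ) : ConvexOn ℝ (Icc 0 1) fun y : ℝ => max (y - c) 0 :=
    ((convexOn_id (convex_Icc 0 1)).sub (concaveOn_const c (convex_Icc 0 1))).sup
      (convexOn_const 0 (convex_Icc 0 1))
  have hμν : volume.restrict A = (2⁻¹ : NNReal) • volume.restrict (Icc (0 : ℝ) 1) := by
    refine Measure.ext_of_forall_integral_max_sub_eq
      (fun c => (hcont c).integrableOn_Icc.mono_set hA01)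
      (fun c => (hcont c).integrableOn_Icc.smul_measure (by simp)) fun c => ?_
    rw [integral_smul_nnreal_measure, hφ _ (hconv c), NNReal.smul_def]
    norm_num
  have hvolA : volume A = 2⁻¹ * volume A := by
    simpa [hA, inter_eq_left.2 hA01] using congr($hμν A)
  have hvolA' : volume A = 2⁻¹ := by
    simpa [inter_eq_right.2 hA01] using congr($hμν (Icc 0 1))
  rw [hvolA'] at hvolA
  have hhalf := congrArg ENNReal.toReal hvolA
  norm_num at hhalf
end

section
/- Let Y be a Polish space, ζ a Borel probability measure on ℝ^d with finite first moment, ν a Borel probability measure on Y, and let F, F_n : Y → ℝ^d be Borel measurable functions with ∫_Y |F_n(y) − F(y)| ν(dy) → 0 as n → ∞. Suppose π_n ∈ Π(ζ,ν) are such that ∫_{ℝ^d×Y} φ(u) F_n(y) π_n(du dy) = ∫_{ℝ^d} φ(u) u ζ(du) for every bounded continuous φ : ℝ^d → ℝ (i.e. (u, F_n(y)) is a martingale with respect to π_n), and that π_n converges weakly to π ∈ Π(ζ,ν). Then ∫_{ℝ^d×Y} φ(u) F(y) π(du dy) = ∫_{ℝ^d} φ(u) u ζ(du) for every bounded continuous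 φ : ℝ^d → ℝ. -/
/-!
With the second marginal fixed at `ν`, the map `(μ, H) ↦ ∫ φ(u) H(y) dμ` is `‖φ‖`-Lipschitz in
`H` for the `L¹(ν)` norm, uniformly in `μ`, and continuous in `μ` for the weak topology when `H`
is bounded continuous. Since bounded continuous functions are dense in `L¹(ν)`, the integrals
`∫ φ(u) F_n(y) dπ_n`, all equal to `∫ φ(u) u dζ`, converge to `∫ φ(u) F(y) dπ`.

If `F` is not `ν`-integrable, the Bochner integral's junk value `0` turns the hypothesis into
`∫ ψ(u) u dζ = 0` for every bounded continuous `ψ ≥ 1`, hence for every bounded continuous `ψ`;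
so `ζ = δ₀` and both sides vanish.
-/

open MeasureTheory Filter

noncomputable section

open Topology BoundedContinuousFunction

theorem tendsto_of_forall_dist_le_of_tendsto {ι α : Type*} [PseudoMetricSpace α] {l : Filter ι}
    {f : ι → α} {a : α}
    (h : ∀ ε > 0, ∃ g : ι → α, ∃ b, Tendsto g l (𝓝 b) ∧ (∀ i, dist (f i) (g i) ≤ ε) ∧
      dist a b ≤ ε) :
    Tendsto f l (𝓝 a) := by
  rw [Metric.tendsto_nhds]
  intro ε hε
  obtain ⟨g, b, hg, hfg, hab⟩ := h (ε / 3) (by positivity)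
  filter_upwards [Metric.tendsto_nhds.mp hg (ε / 3) (by positivity)] with i hi
  calc dist (f i) a ≤ dist (f i) (g i) + dist (g i) b + dist b a := dist_triangle4 _ _ _ _
    _ < ε := by linarith [hfg i, dist_comm a b]

namespace MeasureTheory.ProbabilityMeasure

theorem tendsto_integral_of_tendsto {X : Type*} [TopologicalSpace X] [MeasurableSpace X]
    [OpensMeasurableSpace X] {E : Type*} [NormedAddCommGroup E] [NormedSpace ℝ E]
    [FiniteDimensional ℝ E] {ι : Type*} {l : Filter ι} {μs : ι → ProbabilityMeasure X}
    {μ : ProbabilityMeasure X} (h : Tendsto μs l (𝓝 μ)) (f : X →ᵇ E) :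
    Tendsto (fun i => ∫ x, f x ∂(μs i : Measure X)) l (𝓝 (∫ x, f x ∂(μ : Measure X))) := by
  let e := (Module.finBasis ℝ E).equivFunL
  suffices Tendsto (fun i => e (∫ x, f x ∂(μs i : Measure X))) l
      (𝓝 (e (∫ x, f x ∂(μ : Measure X)))) by
    simpa [Function.comp_def] using (e.symm.continuous.tendsto _).comp this
  rw [tendsto_pi_nhds]
  intro j
  let L : E →L[ℝ] ℝ := (ContinuousLinearMap.proj j).comp e.toContinuousLinearMap
  have hL : ∀ ρ : ProbabilityMeasure X,
      e (∫ x, f x ∂(ρ : Measure X)) j = ∫ x, L.compLeftContinuousBounded X f x ∂(ρ : Measure X) :=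
    fun ρ => (L.integral_comp_comm
      (.of_bound f.continuous.aestronglyMeasurable ‖f‖ (ae_of_all _ f.norm_coe_le_norm))).symm
  simpa only [hL] using tendsto_iff_forall_integral_tendsto.mp h (L.compLeftContinuousBounded X f)

end MeasureTheory.ProbabilityMeasure

section SecondMarginal

variable {α β E : Type*} [MeasurableSpace α] [MeasurableSpace β] [NormedAddCommGroup E]
  {μ : Measure (α × β)} {ν : Measure β} {H : β → E}

theorem aestronglyMeasurable_comp_snd (hsnd : μ.map Prod.snd = ν)
    (hH : AEStronglyMeasurable H ν) : AEStronglyMeasurable (fun q : α × β => H q.2) μ := by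
  subst hsnd
  exact hH.comp_aemeasurable measurable_snd.aemeasurable

theorem integrable_comp_snd_iff (hsnd : μ.map Prod.snd = ν) (hH : AEStronglyMeasurable H ν) :
    Integrable (fun q : α × β => H q.2) μ ↔ Integrable H ν := by
  subst hsnd
  exact (integrable_map_measure hH measurable_snd.aemeasurable).symm

variable [NormedSpace ℝ E]

theorem integral_comp_snd (hsnd : μ.map Prod.snd = ν) (hH : AEStronglyMeasurable H ν) :
    ∫ q : α × β, H q.2 ∂μ = ∫ y, H y ∂ν := by
  subst hsnd
  exact (integral_map measurable_snd.aemeasurable hH).symm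

theorem integral_smul_comp_snd_eq_zero_of_one_le (hsnd : μ.map Prod.snd = ν)
    (hH : AEStronglyMeasurable H ν) (hHi : ¬Integrable H ν) {ψ : α → ℝ} (hψ : ∀ a, 1 ≤ ψ a) :
    ∫ q : α × β, ψ q.1 • H q.2 ∂μ = 0 := by
  refine integral_undef fun hi => hHi ((integrable_comp_snd_iff hsnd hH).1 ?_)
  refine hi.norm.mono' (aestronglyMeasurable_comp_snd hsnd hH) (ae_of_all _ fun q => ?_)
  rw [norm_smul, Real.norm_eq_abs]
  exact le_mul_of_one_le_left (norm_nonneg _) ((hψ q.1).trans (le_abs_self _))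

theorem integral_smul_comp_snd_eq_zero_of_ae_fst_eq (hsnd : μ.map Prod.snd = ν)
    (hH : AEStronglyMeasurable H ν) (hHi : ¬Integrable H ν) {a : α} (ha : ∀ᵐ q ∂μ, q.1 = a)
    (φ : α → ℝ) : ∫ q : α × β, φ q.1 • H q.2 ∂μ = 0 :=
  calc ∫ q : α × β, φ q.1 • H q.2 ∂μ = ∫ q : α × β, φ a • H q.2 ∂μ :=
        integral_congr_ae (ha.mono fun q hq => by simp only [hq])
    _ = φ a • ∫ q : α × β, H q.2 ∂μ := integral_smul _ _
    _ = 0 := by rw [integral_comp_snd hsnd hH, integral_undef hHi, smul_zero]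

variable [TopologicalSpace α] [TopologicalSpace β] [OpensMeasurableSpace (α × β)]

theorem norm_integral_smul_comp_snd_sub_le (hsnd : μ.map Prod.snd = ν) (φ : α →ᵇ ℝ)
    {H₁ H₂ : β → E} (hH₁ : Integrable H₁ ν) (hH₂ : Integrable H₂ ν) :
    ‖∫ q, φ q.1 • H₁ q.2 ∂μ - ∫ q, φ q.1 • H₂ q.2 ∂μ‖ ≤ ‖φ‖ * ∫ y, ‖H₁ y - H₂ y‖ ∂ν := by
  have hi₁ := (integrable_comp_snd_iff hsnd hH₁.aestronglyMeasurable).2 hH₁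
  have hi₂ := (integrable_comp_snd_iff hsnd hH₂.aestronglyMeasurable).2 hH₂
  have hφ : ∀ G : α × β → E, Integrable G μ → Integrable (fun q => φ q.1 • G q) μ :=
    fun G hG => hG.bdd_smul ‖φ‖ (φ.continuous.comp continuous_fst).aestronglyMeasurable
      (ae_of_all _ fun q => φ.norm_coe_le_norm q.1)
  rw [← integral_sub (hφ _ hi₁) (hφ _ hi₂),
    ← integral_comp_snd (H := fun y => ‖H₁ y - H₂ y‖) hsnd (hH₁.sub hH₂).norm.aestronglyMeasurable,
    ← integral_const_mul]
  refine norm_integral_le_of_norm_le ((hi₁.sub hi₂).norm.const_mul _) (ae_of_all _ fun q => ?_)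
  rw [← smul_sub, norm_smul]
  exact mul_le_mul_of_nonneg_right (φ.norm_coe_le_norm _) (norm_nonneg _)

end SecondMarginal

section WeakLimit

variable {X Y E : Type*} [TopologicalSpace X] [MeasurableSpace X] [TopologicalSpace Y]
  [TopologicalSpace.PseudoMetrizableSpace Y] [MeasurableSpace Y] [BorelSpace Y]
  [OpensMeasurableSpace (X × Y)] [NormedAddCommGroup E] [NormedSpace ℝ E] [FiniteDimensional ℝ E]
  {ι : Type*} {l : Filter ι} {μs : ι → ProbabilityMeasure (X × Y)} {μ : ProbabilityMeasure (X × Y)}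
  {ν : Measure Y}

theorem tendsto_integral_smul_comp_snd (hμs : Tendsto μs l (𝓝 μ))
    (hsnd : ∀ i, (μs i : Measure (X × Y)).map Prod.snd = ν)
    (hμ : (μ : Measure (X × Y)).map Prod.snd = ν) (φ : X →ᵇ ℝ) {H : Y → E}
    (hH : Integrable H ν) :
    Tendsto (fun i => ∫ q, φ q.1 • H q.2 ∂(μs i : Measure (X × Y))) l
      (𝓝 (∫ q, φ q.1 • H q.2 ∂(μ : Measure (X × Y)))) := by
  have : IsFiniteMeasure ν := hμ ▸ inferInstance
  refine tendsto_of_forall_dist_le_of_tendsto fun ε hε => ?_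
  obtain ⟨G, hHG, hG⟩ := hH.exists_boundedContinuous_integral_sub_le
    (ε := ε / (‖φ‖ + 1)) (by positivity)
  have hbound : ‖φ‖ * ∫ y, ‖H y - G y‖ ∂ν ≤ ε :=
    calc ‖φ‖ * ∫ y, ‖H y - G y‖ ∂ν ≤ (‖φ‖ + 1) * (ε / (‖φ‖ + 1)) := by gcongr; linarith
      _ = ε := mul_div_cancel₀ _ (by positivity)
  let T : X × Y →ᵇ E :=
    φ.compContinuous (ContinuousMap.fst : C(X × Y, X)) •
      G.compContinuous (ContinuousMap.snd : C(X × Y, Y))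
  refine ⟨fun i => ∫ q, T q ∂(μs i : Measure (X × Y)), ∫ q, T q ∂(μ : Measure (X × Y)),
    ProbabilityMeasure.tendsto_integral_of_tendsto hμs T, fun i => ?_, ?_⟩
  · exact (dist_eq_norm _ _).trans_le
      ((norm_integral_smul_comp_snd_sub_le (hsnd i) φ hH hG).trans hbound)
  · exact (dist_eq_norm _ _).trans_le
      ((norm_integral_smul_comp_snd_sub_le hμ φ hH hG).trans hbound)

theorem tendsto_integral_smul_comp_snd_of_tendsto_integral_norm_sub (hμs : Tendsto μs l (𝓝 μ))
    (hsnd : ∀ i, (μs i : Measure (X × Y)).map Prod.snd = ν)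
    (hμ : (μ : Measure (X × Y)).map Prod.snd = ν) (φ : X →ᵇ ℝ) {Hs : ι → Y → E} {H : Y → E}
    (hHs : ∀ i, Integrable (Hs i) ν) (hH : Integrable H ν)
    (hlim : Tendsto (fun i => ∫ y, ‖Hs i y - H y‖ ∂ν) l (𝓝 0)) :
    Tendsto (fun i => ∫ q, φ q.1 • Hs i q.2 ∂(μs i : Measure (X × Y))) l
      (𝓝 (∫ q, φ q.1 • H q.2 ∂(μ : Measure (X × Y)))) := by
  refine (tendsto_integral_smul_comp_snd hμs hsnd hμ φ hH).congr_dist <|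
    squeeze_zero (fun _ => dist_nonneg) (fun i => ?_) (by simpa using hlim.const_mul ‖φ‖)
  rw [dist_comm, dist_eq_norm]
  exact norm_integral_smul_comp_snd_sub_le (hsnd i) φ (hHs i) hH

end WeakLimit

section VanishingFirstMoments

open scoped InnerProductSpace

variable {E : Type*} [NormedAddCommGroup E] [InnerProductSpace ℝ E] [CompleteSpace E]
  [SecondCountableTopology E] [MeasurableSpace E] [OpensMeasurableSpace E] {μ : Measure E}

theorem ae_eq_zero_of_forall_integral_smul_eq_zero (hμ : Integrable (fun u => u) μ)
    (h : ∀ χ : E →ᵇ ℝ, ∫ u, χ u • u ∂μ = 0) : ∀ᵐ u ∂μ, u = 0 := by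
  refine ae_eq_zero_of_forall_inner (𝕜 := ℝ) fun c => ?_
  have hden : ∀ u : E, 0 < 1 + ‖u‖ := fun u => by positivity
  let χ : E →ᵇ ℝ := .ofNormedAddCommGroup (fun u => ⟪c, u⟫_ℝ / (1 + ‖u‖))
    (by fun_prop (disch := exact fun u => (hden u).ne')) ‖c‖ fun u => by
      rw [norm_div, Real.norm_of_nonneg (hden u).le, div_le_iff₀ (hden u)]
      nlinarith [norm_inner_le_norm (𝕜 := ℝ) c u, norm_nonneg c, norm_nonneg u]
  have hχ : Integrable (fun u => χ u • u) μ :=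
    hμ.bdd_smul ‖χ‖ χ.continuous.aestronglyMeasurable (ae_of_all _ χ.norm_coe_le_norm)
  have hsq : ∀ u, ⟪c, χ u • u⟫_ℝ = ⟪c, u⟫_ℝ ^ 2 / (1 + ‖u‖) := fun u => by
    simp only [inner_smul_right, χ, BoundedContinuousFunction.coe_ofNormedAddCommGroup]
    ring
  have hzero : ∫ u, ⟪c, χ u • u⟫_ℝ ∂μ = 0 := by rw [integral_inner hχ, h χ, inner_zero_right]
  have hnonneg : 0 ≤ fun u => ⟪c, χ u • u⟫_ℝ := fun u => by
    simp only [Pi.zero_apply, hsq]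
    positivity
  filter_upwards [(integral_eq_zero_iff_of_nonneg hnonneg (hχ.const_inner c)).1 hzero] with u hu
  simpa [hsq, (hden u).ne'] using hu

theorem ae_eq_zero_of_forall_one_le_integral_smul_eq_zero (hμ : Integrable (fun u => u) μ)
    (h : ∀ ψ : E →ᵇ ℝ, (∀ u, 1 ≤ ψ u) → ∫ u, ψ u • u ∂μ = 0) : ∀ᵐ u ∂μ, u = 0 := by
  refine ae_eq_zero_of_forall_integral_smul_eq_zero hμ fun χ => ?_
  have hmean : ∫ u, u ∂μ = 0 := by simpa using h 1 fun _ => le_rfl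
  let ψ : E →ᵇ ℝ := χ + .const E (‖χ‖ + 1)
  have hψ : ∀ u, 1 ≤ ψ u := fun u => by
    have := neg_le_of_abs_le (χ.norm_coe_le_norm u)
    simp only [ψ, coe_add, const_apply', Pi.add_apply]
    linarith
  have hχ : Integrable (fun u => χ u • u) μ :=
    hμ.bdd_smul ‖χ‖ χ.continuous.aestronglyMeasurable (ae_of_all _ χ.norm_coe_le_norm)
  have hsplit : (fun u => ψ u • u) = fun u => χ u • u + (‖χ‖ + 1) • u :=
    funext fun u => add_smul _ _ _
  have hμc : Integrable (fun u => (‖χ‖ + 1) • u) μ := hμ.smul _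
  have := h ψ hψ
  rwa [hsplit, integral_add hχ hμc, integral_smul, hmean, smul_zero, add_zero] at this

end VanishingFirstMoments

theorem martingale_property_of_weak_limit_general
    {Y : Type*} [MeasurableSpace Y] [TopologicalSpace Y] [PolishSpace Y] [BorelSpace Y]
    {d : ℕ}
    (ζ : Measure (EuclideanSpace ℝ (Fin d)))
    (hζmom : Integrable (fun u => ‖u‖) ζ)
    (ν : Measure Y)
    (F : Y → EuclideanSpace ℝ (Fin d)) (hFmeas : Measurable F)
    (Fn : ℕ → Y → EuclideanSpace ℝ (Fin d)) (hFnmeas : ∀ n, Measurable (Fn n))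
    (hFnint : ∀ n, Integrable (fun y => Fn n y - F y) ν)
    (hL1 : Tendsto (fun n => ∫ y, ‖Fn n y - F y‖ ∂ν) atTop (nhds 0))
    (πn : ℕ → ProbabilityMeasure (EuclideanSpace ℝ (Fin d) × Y))
    (hπnsnd : ∀ n, (πn n : Measure (EuclideanSpace ℝ (Fin d) × Y)).map Prod.snd = ν)
    (hmart : ∀ n, ∀ φ : EuclideanSpace ℝ (Fin d) → ℝ,
      Continuous φ → (∃ C : ℝ, ∀ u, |φ u| ≤ C) →
      ∫ q, φ q.1 • Fn n q.2 ∂(πn n : Measure (EuclideanSpace ℝ (Fin d) × Y)) =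
        ∫ u, φ u • u ∂ζ)
    (π : ProbabilityMeasure (EuclideanSpace ℝ (Fin d) × Y))
    (hπfst : (π : Measure (EuclideanSpace ℝ (Fin d) × Y)).map Prod.fst = ζ)
    (hπsnd : (π : Measure (EuclideanSpace ℝ (Fin d) × Y)).map Prod.snd = ν)
    (hweak : Tendsto πn atTop (nhds π)) :
    ∀ φ : EuclideanSpace ℝ (Fin d) → ℝ,
      Continuous φ → (∃ C : ℝ, ∀ u, |φ u| ≤ C) →
      ∫ q, φ q.1 • F q.2 ∂(π : Measure (EuclideanSpace ℝ (Fin d) × Y)) =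
        ∫ u, φ u • u ∂ζ := by
  rintro φ hφ ⟨C, hC⟩
  have hmart' : ∀ n (ψ : EuclideanSpace ℝ (Fin d) →ᵇ ℝ),
      ∫ q, ψ q.1 • Fn n q.2 ∂(πn n : Measure (EuclideanSpace ℝ (Fin d) × Y)) =
        ∫ u, ψ u • u ∂ζ :=
    fun n ψ => hmart n ψ ψ.continuous ⟨‖ψ‖, ψ.norm_coe_le_norm⟩
  let φb : EuclideanSpace ℝ (Fin d) →ᵇ ℝ := .ofNormedAddCommGroup φ hφ C hC
  change ∫ q, φb q.1 • F q.2 ∂(π : Measure (EuclideanSpace ℝ (Fin d) × Y)) = ∫ u, φb u • u ∂ζ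
  by_cases hF : Integrable F ν
  · have hFn : ∀ n, Integrable (Fn n) ν := fun n =>
      ((hFnint n).add hF).congr (ae_of_all _ fun _ => sub_add_cancel _ _)
    have hlim := tendsto_integral_smul_comp_snd_of_tendsto_integral_norm_sub hweak hπnsnd hπsnd
      φb hFn hF hL1
    simp only [hmart'] at hlim
    exact tendsto_nhds_unique hlim tendsto_const_nhds
  · have hFn₀ : ¬Integrable (Fn 0) ν := fun h =>
      hF ((h.sub (hFnint 0)).congr (ae_of_all _ fun _ => sub_sub_cancel _ _))
    have hζ : ∀ᵐ u ∂ζ, u = 0 := ae_eq_zero_of_forall_one_le_integral_smul_eq_zero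
      ((integrable_norm_iff aestronglyMeasurable_id).1 hζmom) fun ψ hψ =>
        (hmart' 0 ψ).symm.trans <| integral_smul_comp_snd_eq_zero_of_one_le (hπnsnd 0)
          (hFnmeas 0).aestronglyMeasurable hFn₀ hψ
    have hπ : ∀ᵐ q ∂(π : Measure (EuclideanSpace ℝ (Fin d) × Y)), q.1 = 0 :=
      ae_of_ae_map measurable_fst.aemeasurable (hπfst ▸ hζ)
    rw [integral_smul_comp_snd_eq_zero_of_ae_fst_eq hπsnd hFmeas.aestronglyMeasurable hF hπ,
      integral_eq_zero_of_ae (hζ.mono fun u hu => by simp [hu])]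

/-- **Stability of the martingale property under weak convergence of plans and `L¹`
perturbation of `F`.** Let `Y` be Polish, `ζ` a Borel probability measure on `ℝ^d` with
finite first moment, `ν` a Borel probability measure on `Y`, and `F, F_n : Y → ℝ^d` Borel
measurable with `∫ ‖F_n − F‖ dν → 0`. If `π_n ∈ Π(ζ,ν)` are such that
`∫ φ(u) F_n(y) π_n(du dy) = ∫ φ(u) u ζ(du)` for every bounded continuous `φ : ℝ^d → ℝ`
(i.e. `(u, F_n(y))` is a martingale with respect to `π_n`), and `π_n → π ∈ Π(ζ,ν)`
weakly, then `∫ φ(u) F(y) π(du dy) = ∫ φ(u) u ζ(du)` for every bounded continuous `φ`. -/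
theorem martingale_property_of_weak_limit
    {Y : Type*} [MeasurableSpace Y] [TopologicalSpace Y] [PolishSpace Y] [BorelSpace Y]
    {d : ℕ}
    (ζ : Measure (EuclideanSpace ℝ (Fin d))) [IsProbabilityMeasure ζ]
    (hζmom : Integrable (fun u => ‖u‖) ζ)
    (ν : Measure Y) [IsProbabilityMeasure ν]
    (F : Y → EuclideanSpace ℝ (Fin d)) (hFmeas : Measurable F)
    (Fn : ℕ → Y → EuclideanSpace ℝ (Fin d)) (hFnmeas : ∀ n, Measurable (Fn n))
    (hFnint : ∀ n, Integrable (fun y => Fn n y - F y) ν)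
    (hL1 : Tendsto (fun n => ∫ y, ‖Fn n y - F y‖ ∂ν) atTop (nhds 0))
    (πn : ℕ → ProbabilityMeasure (EuclideanSpace ℝ (Fin d) × Y))
    (hπnfst : ∀ n, (πn n : Measure (EuclideanSpace ℝ (Fin d) × Y)).map Prod.fst = ζ)
    (hπnsnd : ∀ n, (πn n : Measure (EuclideanSpace ℝ (Fin d) × Y)).map Prod.snd = ν)
    (hmart : ∀ n, ∀ φ : EuclideanSpace ℝ (Fin d) → ℝ,
      Continuous φ → (∃ C : ℝ, ∀ u, |φ u| ≤ C) →
      ∫ q, φ q.1 • Fn n q.2 ∂(πn n : Measure (EuclideanSpace ℝ (Fin d) × Y)) =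
        ∫ u, φ u • u ∂ζ)
    (π : ProbabilityMeasure (EuclideanSpace ℝ (Fin d) × Y))
    (hπfst : (π : Measure (EuclideanSpace ℝ (Fin d) × Y)).map Prod.fst = ζ)
    (hπsnd : (π : Measure (EuclideanSpace ℝ (Fin d) × Y)).map Prod.snd = ν)
    (hweak : Tendsto πn atTop (nhds π)) :
    ∀ φ : EuclideanSpace ℝ (Fin d) → ℝ,
      Continuous φ → (∃ C : ℝ, ∀ u, |φ u| ≤ C) →
      ∫ q, φ q.1 • F q.2 ∂(π : Measure (EuclideanSpace ℝ (Fin d) × Y)) =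
        ∫ u, φ u • u ∂ζ :=
  martingale_property_of_weak_limit_general ζ hζmom ν F hFmeas Fn hFnmeas hFnint hL1 πn hπnsnd hmart
    π hπfst hπsnd hweak
end
end
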